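/- Set Γ(s) = ∫_0^s 1/γ(y) dy. Suppose u : [0,m] × [0,∞) → ℝ is continuously differentiable, satisfies the linear transport equation ∂_t u(s,t) + γ(s) ∂_s u(s,t) + (γ'(s)+μ(s)) u(s,t) = 0 for all (s,t) ∈ [0,m] × (0,∞), and u(0,t) = 0 for all t ≥ 0. Then u(s,t) = 0 whenever t > Γ(s); in particular u(·,t) ≡ 0 for every t > Γ(m), i.e., the semigroup generated by the pure transport-mortality part is nilpotent. -/

import Mathlib

/-!
Fix `s ∈ [0, m]` and `t > Γ(s)`, and follow the characteristic `σ ↦ (σ, τ σ)` with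
`τ σ = t - Γ(s) + Γ(σ)`, which ends at `(s, t)` and starts at `(0, t - Γ(s))`, a positive
time.
Since `τ' = 1 / γ`, the chain rule and the transport equation (divided by `γ`) show that
`w σ = u(σ, τ σ)` solves the linear ODE `w' = -((γ' + μ) / γ) w` on `[0, s]`. The boundary
condition gives `w 0 = 0`, so Grönwall's inequality forces `w ≡ 0`, and `u(s, t) = w s = 0`.
The chain rule needs `u` to be differentiable on the box, which follows from the partial
derivatives because `∂ₜu` is continuous.
-/

open Set MeasureTheory intervalIntegral Filter Asymptotics
open scoped Topology

section Partials

variable {F : Type*} [NormedAddCommGroup F] [NormedSpace ℝ F]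
  {f fx fy : ℝ → ℝ → F} {S T : Set ℝ}

theorem hasFDerivWithinAt_uncurry_of_partials {p : ℝ × ℝ} (hT : Convex ℝ T) (hp : p.2 ∈ T)
    (hx : HasDerivWithinAt (f · p.2) (fx p.1 p.2) S p.1)
    (hy : ∀ q ∈ S ×ˢ T, HasDerivWithinAt (f q.1 ·) (fy q.1 q.2) T q.2)
    (hyc : ContinuousWithinAt ↿fy (S ×ˢ T) p) :
    HasFDerivWithinAt ↿f ((ContinuousLinearMap.fst ℝ ℝ ℝ).smulRight (fx p.1 p.2)
      + (ContinuousLinearMap.snd ℝ ℝ ℝ).smulRight (fy p.1 p.2)) (S ×ˢ T) p := by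
  have hfst : (fun q : ℝ × ℝ => f q.1 p.2 - f p.1 p.2 - (q.1 - p.1) • fx p.1 p.2)
      =o[𝓝[S ×ˢ T] p] fun q => q - p := by
    have hS : Tendsto Prod.fst (𝓝[S ×ˢ T] p) (𝓝[S] p.1) :=
      tendsto_nhdsWithin_of_tendsto_nhds_of_eventually_within _
        continuous_fst.continuousWithinAt.tendsto
        (eventually_mem_nhdsWithin.mono fun q hq => hq.1)
    exact ((hasDerivWithinAt_iff_isLittleO.1 hx).comp_tendsto hS).trans_isBigO
      (isBigO_of_le _ fun q => norm_fst_le (q - p))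
  -- mean value inequality in the second variable, on the part of `T` where `fy` is `ε`-close
  have hsnd : (fun q : ℝ × ℝ => f q.1 q.2 - f q.1 p.2 - (q.2 - p.2) • fy p.1 p.2)
      =o[𝓝[S ×ˢ T] p] fun q => q - p := by
    refine isLittleO_iff.2 fun ε hε => ?_
    obtain ⟨δ, hδ, hclose⟩ := Metric.continuousWithinAt_iff.1 hyc ε hε
    filter_upwards [self_mem_nhdsWithin, nhdsWithin_le_nhds (Metric.ball_mem_nhds p hδ)]
      with q hq hqp
    rw [Metric.mem_ball, Prod.dist_eq, max_lt_iff] at hqp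
    set B := T ∩ Metric.ball p.2 δ
    have hderiv : ∀ r ∈ B, HasDerivWithinAt (fun r => f q.1 r - r • fy p.1 p.2)
        (fy q.1 r - fy p.1 p.2) B r := fun r hr =>
      ((hy (q.1, r) (mk_mem_prod hq.1 hr.1)).mono inter_subset_left).sub
        ((hasDerivWithinAt_id r B).smul_const _ |>.congr_deriv (one_smul ℝ _))
    have hbound : ∀ r ∈ B, ‖fy q.1 r - fy p.1 p.2‖ ≤ ε := fun r hr => by
      rw [← dist_eq_norm]
      refine (hclose (x := (q.1, r)) (mk_mem_prod hq.1 hr.1) ?_).le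
      rw [Prod.dist_eq]
      exact max_lt hqp.1 hr.2
    have hmem : q.2 ∈ B := ⟨hq.2, hqp.2⟩
    calc ‖f q.1 q.2 - f q.1 p.2 - (q.2 - p.2) • fy p.1 p.2‖
        = ‖(f q.1 q.2 - q.2 • fy p.1 p.2) - (f q.1 p.2 - p.2 • fy p.1 p.2)‖ := by
          rw [sub_smul]; congr 1; abel
      _ ≤ ε * ‖q.2 - p.2‖ :=
          (hT.inter (convex_ball _ _)).norm_image_sub_le_of_norm_hasDerivWithin_le
            hderiv hbound ⟨hp, Metric.mem_ball_self hδ⟩ hmem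
      _ ≤ ε * ‖q - p‖ := by gcongr; exact norm_snd_le (q - p)
  refine .of_isLittleO <| (hfst.add hsnd).congr_left fun q => ?_
  simp only [Function.HasUncurry.uncurry, id_eq, add_apply,
    ContinuousLinearMap.smulRight_apply, ContinuousLinearMap.coe_fst',
    ContinuousLinearMap.coe_snd', Prod.fst_sub, Prod.snd_sub]
  abel

theorem hasDerivWithinAt_comp_graph_of_partials (hT : Convex ℝ T) {τ : ℝ → ℝ} {τ' σ : ℝ}
    {I : Set ℝ} (hτ : HasDerivWithinAt τ τ' I σ) (hσ : σ ∈ I)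
    (hmaps : MapsTo (fun σ => (σ, τ σ)) I (S ×ˢ T))
    (hx : HasDerivWithinAt (f · (τ σ)) (fx σ (τ σ)) S σ)
    (hy : ∀ q ∈ S ×ˢ T, HasDerivWithinAt (f q.1 ·) (fy q.1 q.2) T q.2)
    (hyc : ContinuousWithinAt ↿fy (S ×ˢ T) (σ, τ σ)) :
    HasDerivWithinAt (fun σ => f σ (τ σ)) (fx σ (τ σ) + τ' • fy σ (τ σ)) I σ := by
  have hF := hasFDerivWithinAt_uncurry_of_partials hT (hmaps hσ).2 hx hy hyc
  refine (hF.comp_hasDerivWithinAt σ ((hasDerivWithinAt_id σ I).prodMk hτ) hmaps).congr_deriv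
    ?_
  simp only [add_apply, ContinuousLinearMap.smulRight_apply, ContinuousLinearMap.coe_fst',
    ContinuousLinearMap.coe_snd', one_smul]

end Partials

theorem ContinuousOn.hasDerivWithinAt_integral_Icc {E : Type*} [NormedAddCommGroup E]
    [NormedSpace ℝ E] [CompleteSpace E] {f : ℝ → E} {a b x : ℝ}
    (hf : ContinuousOn f (Icc a b)) (hx : x ∈ Icc a b) :
    HasDerivWithinAt (fun y => ∫ t in a..y, f t) (f x) (Icc a b) x := by
  have : Fact (x ∈ Icc a b) := ⟨hx⟩
  exact integral_hasDerivWithinAt_right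
    ((hf.mono (uIcc_subset_Icc (left_mem_Icc.2 (hx.1.trans hx.2)) hx)).intervalIntegrable)
    (hf.stronglyMeasurableAtFilter_nhdsWithin measurableSet_Icc x) (hf x hx)

theorem monotoneOn_integral_of_nonneg {f : ℝ → ℝ} {a b : ℝ} (hf : ContinuousOn f (Icc a b))
    (hnonneg : ∀ x ∈ Icc a b, 0 ≤ f x) : MonotoneOn (fun x => ∫ t in a..x, f t) (Icc a b) :=
  fun _ hx _ hy hxy => integral_mono_interval le_rfl hx.1 hxy
    ((ae_restrict_iff' measurableSet_Ioc).2 <| .of_forall fun z hz =>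
      hnonneg z ⟨hz.1.le, hz.2.trans hy.2⟩)
    ((hf.mono (Icc_subset_Icc_right hy.2)).intervalIntegrable_of_Icc hy.1)

theorem eqOn_zero_of_hasDerivWithinAt_smul_self {E : Type*} [NormedAddCommGroup E]
    [NormedSpace ℝ E] {w : ℝ → E} {c : ℝ → ℝ} {a b : ℝ} (hc : ContinuousOn c (Icc a b))
    (hw : ∀ x ∈ Icc a b, HasDerivWithinAt w (c x • w x) (Icc a b) x) (ha : w a = 0) :
    EqOn w 0 (Icc a b) := by
  obtain ⟨K, hK⟩ := isCompact_Icc.exists_bound_of_continuousOn hc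
  refine eq_zero_of_abs_deriv_le_mul_abs_self_of_eq_zero_right (K := K)
    (fun x hx => (hw x hx).continuousWithinAt)
    (fun x hx => (hw x (Ico_subset_Icc_self hx)).mono_of_mem_nhdsWithin
      (Icc_mem_nhdsGE_of_mem hx))
    ha fun x hx => ?_
  rw [norm_smul]
  exact mul_le_mul_of_nonneg_right (hK x (Ico_subset_Icc_self hx)) (norm_nonneg _)

theorem transport_eq_zero_of_integral_inv_lt {m : ℝ} {γ γ' μ : ℝ → ℝ} {u us ut : ℝ → ℝ → ℝ}
    (hγc : ContinuousOn γ (Icc 0 m)) (hγ'c : ContinuousOn γ' (Icc 0 m))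
    (hγpos : ∀ s ∈ Icc (0:ℝ) m, 0 < γ s) (hμc : ContinuousOn μ (Icc 0 m))
    (husd : ∀ t ∈ Ici (0:ℝ), ∀ s ∈ Icc (0:ℝ) m,
      HasDerivWithinAt (fun σ => u σ t) (us s t) (Icc 0 m) s)
    (hutd : ∀ s ∈ Icc (0:ℝ) m, ∀ t ∈ Ici (0:ℝ),
      HasDerivWithinAt (fun τ => u s τ) (ut s t) (Ici 0) t)
    (hutc : ContinuousOn (fun q : ℝ × ℝ => ut q.1 q.2) (Icc 0 m ×ˢ Ici 0))
    (hpde : ∀ s ∈ Icc (0:ℝ) m, ∀ t ∈ Ioi (0:ℝ),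
      ut s t + γ s * us s t + (γ' s + μ s) * u s t = 0)
    (hbc : ∀ t ∈ Ici (0:ℝ), u 0 t = 0) {s t : ℝ} (hs : s ∈ Icc 0 m)
    (ht : ∫ y in (0:ℝ)..s, 1 / γ y < t) : u s t = 0 := by
  set Γ : ℝ → ℝ := fun x => ∫ y in (0:ℝ)..x, 1 / γ y
  have hm : 0 ≤ m := hs.1.trans hs.2
  have hsm : Icc 0 s ⊆ Icc 0 m := Icc_subset_Icc_right hs.2
  have hinv : ContinuousOn (fun y => 1 / γ y) (Icc 0 m) :=
    continuousOn_const.div hγc fun y hy => (hγpos y hy).ne'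
  have hΓ : MonotoneOn Γ (Icc 0 m) :=
    monotoneOn_integral_of_nonneg hinv fun y hy => (one_div_pos.2 (hγpos y hy)).le
  set τ : ℝ → ℝ := fun σ => t - Γ s + Γ σ
  have hτpos : ∀ σ ∈ Icc 0 s, 0 < τ σ := fun σ hσ => by
    have : Γ 0 ≤ Γ σ := hΓ (left_mem_Icc.2 hm) (hsm hσ) hσ.1
    simp only [Γ, τ, integral_same] at this ⊢
    linarith
  have hmaps : MapsTo (fun σ => (σ, τ σ)) (Icc 0 s) (Icc 0 m ×ˢ Ici 0) :=
    fun σ hσ => ⟨hsm hσ, (hτpos σ hσ).le⟩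
  set w : ℝ → ℝ := fun σ => u σ (τ σ)
  have hw : ∀ σ ∈ Icc 0 s,
      HasDerivWithinAt w (-((γ' σ + μ σ) / γ σ) • w σ) (Icc 0 s) σ := by
    intro σ hσ
    have hτ : HasDerivWithinAt τ (1 / γ σ) (Icc 0 s) σ :=
      ((hinv.mono hsm).hasDerivWithinAt_integral_Icc hσ).const_add _
    refine (hasDerivWithinAt_comp_graph_of_partials (convex_Ici 0) hτ hσ hmaps
      (husd _ (hτpos σ hσ).le σ (hsm hσ)) (fun q hq => hutd q.1 hq.1 q.2 hq.2)
      (hutc _ (hmaps hσ))).congr_deriv ?_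
    have hpdeσ := hpde σ (hsm hσ) (τ σ) (hτpos σ hσ)
    have hγσ := (hγpos σ (hsm hσ)).ne'
    simp only [w, smul_eq_mul]
    field_simp
    linarith
  have hcoef : ContinuousOn (fun σ => -((γ' σ + μ σ) / γ σ)) (Icc 0 s) :=
    ((hγ'c.add hμc).div hγc fun y hy => (hγpos y hy).ne').neg.mono hsm
  have hw0 : w 0 = 0 := by
    simp only [w, τ, Γ, integral_same, add_zero]
    exact hbc _ (sub_nonneg.2 ht.le)
  simpa [w, τ] using
    eqOn_zero_of_hasDerivWithinAt_smul_self hcoef hw hw0 (right_mem_Icc.2 hs.1)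

theorem transport_semigroup_nilpotent_general (m : ℝ)
    (γ γ' μ : ℝ → ℝ)
    (hγd : ∀ s ∈ Icc (0:ℝ) m, HasDerivWithinAt γ (γ' s) (Icc 0 m) s)
    (hγ'c : ContinuousOn γ' (Icc 0 m))
    (hγpos : ∀ s ∈ Icc (0:ℝ) m, 0 < γ s)
    (hμc : ContinuousOn μ (Icc 0 m))
    (u us ut : ℝ → ℝ → ℝ)
    (husd : ∀ t ∈ Ici (0:ℝ), ∀ s ∈ Icc (0:ℝ) m,
      HasDerivWithinAt (fun σ => u σ t) (us s t) (Icc 0 m) s)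
    (hutd : ∀ s ∈ Icc (0:ℝ) m, ∀ t ∈ Ici (0:ℝ),
      HasDerivWithinAt (fun τ => u s τ) (ut s t) (Ici 0) t)
    (hutc : ContinuousOn (fun q : ℝ × ℝ => ut q.1 q.2) (Icc 0 m ×ˢ Ici 0))
    (hpde : ∀ s ∈ Icc (0:ℝ) m, ∀ t ∈ Ioi (0:ℝ),
      ut s t + γ s * us s t + (γ' s + μ s) * u s t = 0)
    (hbc : ∀ t ∈ Ici (0:ℝ), u 0 t = 0) :
    (∀ s ∈ Icc (0:ℝ) m, ∀ t : ℝ, (∫ y in (0:ℝ)..s, 1 / γ y) < t → u s t = 0) ∧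
    (∀ t : ℝ, (∫ y in (0:ℝ)..m, 1 / γ y) < t → ∀ s ∈ Icc (0:ℝ) m, u s t = 0) := by
  have hγc : ContinuousOn γ (Icc 0 m) := fun s hs => (hγd s hs).continuousWithinAt
  have hvanish : ∀ s ∈ Icc (0:ℝ) m, ∀ t : ℝ, (∫ y in (0:ℝ)..s, 1 / γ y) < t → u s t = 0 :=
    fun s hs t ht => transport_eq_zero_of_integral_inv_lt hγc hγ'c hγpos hμc husd hutd hutc
      hpde hbc hs ht
  refine ⟨hvanish, fun t ht s hs => hvanish s hs t (lt_of_le_of_lt ?_ ht)⟩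
  exact monotoneOn_integral_of_nonneg
    (continuousOn_const.div hγc fun y hy => (hγpos y hy).ne')
    (fun y hy => (one_div_pos.2 (hγpos y hy)).le) hs (right_mem_Icc.2 (hs.1.trans hs.2)) hs.2

/-- Nilpotency of the semigroup generated by the pure transport-mortality part:
any continuously differentiable solution of the linear transport equation with
zero boundary condition at `s = 0` vanishes for `t > Γ(s)`, where
`Γ(s) = ∫_0^s 1/γ(y) dy`; in particular `u(·,t) ≡ 0` for every `t > Γ(m)`. -/
theorem transport_semigroup_nilpotent (m : ℝ) (hm : 0 < m)
    (γ γ' μ : ℝ → ℝ)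
    (hγd : ∀ s ∈ Icc (0:ℝ) m, HasDerivWithinAt γ (γ' s) (Icc 0 m) s)
    (hγ'c : ContinuousOn γ' (Icc 0 m))
    (hγpos : ∀ s ∈ Icc (0:ℝ) m, 0 < γ s)
    (hμc : ContinuousOn μ (Icc 0 m))
    (u us ut : ℝ → ℝ → ℝ)
    (huc : ContinuousOn (fun q : ℝ × ℝ => u q.1 q.2) (Icc 0 m ×ˢ Ici 0))
    (husd : ∀ t ∈ Ici (0:ℝ), ∀ s ∈ Icc (0:ℝ) m,
      HasDerivWithinAt (fun σ => u σ t) (us s t) (Icc 0 m) s)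
    (hutd : ∀ s ∈ Icc (0:ℝ) m, ∀ t ∈ Ici (0:ℝ),
      HasDerivWithinAt (fun τ => u s τ) (ut s t) (Ici 0) t)
    (husc : ContinuousOn (fun q : ℝ × ℝ => us q.1 q.2) (Icc 0 m ×ˢ Ici 0))
    (hutc : ContinuousOn (fun q : ℝ × ℝ => ut q.1 q.2) (Icc 0 m ×ˢ Ici 0))
    (hpde : ∀ s ∈ Icc (0:ℝ) m, ∀ t ∈ Ioi (0:ℝ),
      ut s t + γ s * us s t + (γ' s + μ s) * u s t = 0)
    (hbc : ∀ t ∈ Ici (0:ℝ), u 0 t = 0) :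
    (∀ s ∈ Icc (0:ℝ) m, ∀ t : ℝ, (∫ y in (0:ℝ)..s, 1 / γ y) < t → u s t = 0) ∧
    (∀ t : ℝ, (∫ y in (0:ℝ)..m, 1 / γ y) < t → ∀ s ∈ Icc (0:ℝ) m, u s t = 0) :=
  transport_semigroup_nilpotent_general m γ γ' μ hγd hγ'c hγpos hμc u us ut husd hutd hutc hpde hbc
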